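/- arXiv:2210.00029 — 4 statements merged into one kernel-verified Lean document; each statement's English description precedes it below -/
import Mathlib

section
/- In the two-Normal-model setting with g₀ < g₁ and fixed z = √n ȳ, as n → ∞ the posterior probability of M₁ (with equal prior model probabilities) converges to (1 + sqrt(g₁/g₀))⁻¹. -/
open Filter Topology

/-! As `n → ∞` the ratio `(1 + n g₁)/(1 + n g₀)` tends to `g₁/g₀`, while the exponent of the
Bayes factor is linear in `n` over quadratic in `n` and so tends to `0`; hence
`BF₀₁ → √(g₁/g₀)`, and the posterior probability follows by continuity of `x ↦ (1 + x)⁻¹`. -/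

lemma tendsto_affine_div_affine_natCast {a b c d : ℝ} (hd : d ≠ 0) :
    Tendsto (fun n : ℕ => (a + n * c) / (b + n * d)) atTop (𝓝 (c / d)) := by
  have hinv : Tendsto (fun n : ℕ => ((n : ℝ))⁻¹) atTop (𝓝 0) :=
    tendsto_inv_atTop_zero.comp tendsto_natCast_atTop_atTop
  have hlim : Tendsto (fun n : ℕ => (a * (n : ℝ)⁻¹ + c) / (b * (n : ℝ)⁻¹ + d)) atTop
      (𝓝 (c / d)) := by
    simpa [Pi.div_def] using ((hinv.const_mul a).add_const c).div ((hinv.const_mul b).add_const d)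
      (by simpa using hd)
  refine hlim.congr' ?_
  filter_upwards [eventually_ne_atTop 0] with n hn
  have hn' : (n : ℝ) ≠ 0 := Nat.cast_ne_zero.mpr hn
  field_simp

lemma tendsto_affine_atTop_natCast {a b : ℝ} (hb : 0 < b) :
    Tendsto (fun n : ℕ => a + n * b) atTop atTop :=
  tendsto_atTop_add_const_left _ _ (tendsto_natCast_atTop_atTop.atTop_mul_const hb)

lemma tendsto_mul_natCast_div_affine_mul_affine {a b a' b' c : ℝ} (hb : b ≠ 0) (hb' : 0 < b') :
    Tendsto (fun n : ℕ => c * n / ((a + n * b) * (a' + n * b'))) atTop (𝓝 0) := by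
  have hfirst : Tendsto (fun n : ℕ => (0 + n * c) / (a + n * b)) atTop (𝓝 (c / b)) :=
    tendsto_affine_div_affine_natCast hb
  have hsecond : Tendsto (fun n : ℕ => (a' + n * b')⁻¹) atTop (𝓝 0) :=
    tendsto_inv_atTop_zero.comp (tendsto_affine_atTop_natCast hb')
  convert hfirst.mul hsecond using 2 with n
  · rw [zero_add, mul_comm (n : ℝ) c, ← div_eq_mul_inv, div_div]
  · simp

/-- With `0 < g₀ < g₁`, equal prior model probabilities, and `z` fixed, the posterior
probability of `M₁`, namely `(1 + BF₀₁(n))⁻¹`, converges to `(1 + √(g₁/g₀))⁻¹`. -/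
theorem stmt_1 (g0 g1 z : ℝ) (hg0 : 0 < g0) (hg01 : g0 < g1) :
    Tendsto (fun n : ℕ =>
        (1 + Real.sqrt ((1 + n * g1) / (1 + n * g0)) *
            Real.exp ((g0 - g1) * n * z ^ 2 / (2 * (1 + n * g0) * (1 + n * g1))))⁻¹)
      atTop (nhds (1 + Real.sqrt (g1 / g0))⁻¹) := by
  have hsqrt : Tendsto (fun n : ℕ => Real.sqrt ((1 + n * g1) / (1 + n * g0))) atTop
      (𝓝 (Real.sqrt (g1 / g0))) :=
    (tendsto_affine_div_affine_natCast hg0.ne').sqrt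
  have hexponent : Tendsto (fun n : ℕ =>
      (g0 - g1) * n * z ^ 2 / (2 * (1 + n * g0) * (1 + n * g1))) atTop (𝓝 0) := by
    refine (tendsto_mul_natCast_div_affine_mul_affine (a := 1) (a' := 1)
      (c := (g0 - g1) * z ^ 2 / 2) hg0.ne' (hg0.trans hg01)).congr fun n => ?_
    simp only [div_eq_mul_inv, mul_inv]
    ring
  have hbayes := (hsqrt.mul hexponent.rexp).const_add 1
  rw [Real.exp_zero, mul_one] at hbayes
  exact hbayes.inv₀ (by positivity)
end

section
/- With a point-null prior, fixed z ≠ 0, and equal prior model probabilities, BF₀₁ = sqrt(1+n) · exp(−n z²/(2(1+n))) → ∞ as n → ∞, hence Pr(M₀|data) = BF₀₁/(1+BF₀₁) → 1 (the Jeffreys-Lindley paradox). -/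
open Filter Topology

/-! The exponential factor of `BF₀₁` converges to `exp (-z² / 2) > 0`, while the factor
`√(1 + n)` grows without bound, so `BF₀₁ → ∞`; and `x / (1 + x) → 1` as `x → ∞`. -/

theorem Filter.Tendsto.div_one_add_nhds_one {α 𝕜 : Type*} [Field 𝕜] [LinearOrder 𝕜]
    [IsStrictOrderedRing 𝕜] [TopologicalSpace 𝕜] [OrderTopology 𝕜] {l : Filter α} {f : α → 𝕜}
    (hf : Tendsto f l atTop) : Tendsto (fun x => f x / (1 + f x)) l (𝓝 1) := by
  have hden : Tendsto (fun x => 1 + f x) l atTop := tendsto_atTop_add_const_left _ 1 hf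
  have hlim : Tendsto (fun x => 1 - (1 + f x)⁻¹) l (𝓝 1) := by
    simpa using tendsto_const_nhds.sub hden.inv_tendsto_atTop
  refine hlim.congr' ?_
  filter_upwards [hden.eventually_gt_atTop 0] with x hx
  field_simp
  ring

theorem tendsto_natCast_mul_div_one_add (c : ℝ) :
    Tendsto (fun n : ℕ => n * c / (1 + n)) atTop (𝓝 c) := by
  have h := (tendsto_natCast_div_add_atTop (1 : ℝ)).mul_const c
  rw [one_mul] at h
  refine h.congr fun n => ?_
  rw [add_comm (n : ℝ), div_mul_eq_mul_div]

theorem tendsto_sqrt_mul_exp_atTop (z : ℝ) :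
    Tendsto (fun n : ℕ => Real.sqrt (1 + n) * Real.exp (-(n * z ^ 2) / (2 * (1 + n))))
      atTop atTop := by
  have hsqrt : Tendsto (fun n : ℕ => Real.sqrt (1 + n)) atTop atTop :=
    Real.tendsto_sqrt_atTop.comp (tendsto_atTop_add_const_left _ 1 tendsto_natCast_atTop_atTop)
  have hexp : Tendsto (fun n : ℕ => Real.exp (-(n * z ^ 2) / (2 * (1 + n)))) atTop
      (𝓝 (Real.exp (-z ^ 2 / 2))) := by
    refine (Real.continuous_exp.tendsto _).comp ((tendsto_natCast_mul_div_one_add _).congr ?_)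
    intro n
    rw [mul_comm (2 : ℝ), ← div_div]
    ring
  exact hsqrt.atTop_mul_pos (Real.exp_pos _) hexp

theorem stmt_5_general (z : ℝ) :
    Tendsto (fun n : ℕ => Real.sqrt (1 + n) * Real.exp (-(n * z ^ 2) / (2 * (1 + n))))
      atTop atTop ∧
    Tendsto (fun n : ℕ =>
        (Real.sqrt (1 + n) * Real.exp (-(n * z ^ 2) / (2 * (1 + n)))) /
          (1 + Real.sqrt (1 + n) * Real.exp (-(n * z ^ 2) / (2 * (1 + n)))))
      atTop (nhds 1) :=
  ⟨tendsto_sqrt_mul_exp_atTop z, (tendsto_sqrt_mul_exp_atTop z).div_one_add_nhds_one⟩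

/-- Jeffreys–Lindley paradox: with `z ≠ 0` fixed,
`BF₀₁(n) = √(1+n)·exp(−n z²/(2(1+n))) → ∞`, hence
`Pr(M₀|data) = BF₀₁/(1+BF₀₁) → 1`. -/
theorem stmt_5 (z : ℝ) (hz : z ≠ 0) :
    Tendsto (fun n : ℕ => Real.sqrt (1 + n) * Real.exp (-(n * z ^ 2) / (2 * (1 + n))))
      atTop atTop ∧
    Tendsto (fun n : ℕ =>
        (Real.sqrt (1 + n) * Real.exp (-(n * z ^ 2) / (2 * (1 + n)))) /
          (1 + Real.sqrt (1 + n) * Real.exp (-(n * z ^ 2) / (2 * (1 + n)))))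
      atTop (nhds 1) :=
  stmt_5_general z
end

section
/- Let π be a prior density on ℝ that is continuous at a with π(a) > 0 and bounded. With data mean ȳₙ = a + b n^{−1/2} from the N(θ, 1/n) sampling model, for any k > 0 the posterior probability Pr(θ < a + (b−k)n^{−1/2} | ȳₙ) converges to Φ(−k) as n → ∞. -/
open MeasureTheory Filter

/-- Normal density with mean `μ` and variance `v`. -/
noncomputable def normPdf (x μ v : ℝ) : ℝ :=
  (Real.sqrt (2 * Real.pi * v))⁻¹ * Real.exp (-((x - μ) ^ 2) / (2 * v))

/-- Standard normal CDF. -/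
noncomputable def Phi (t : ℝ) : ℝ := ∫ x in Set.Iic t, normPdf x 0 1

lemma normPdf_nonneg (x μ v : ℝ) : 0 ≤ normPdf x μ v := by
  unfold normPdf; positivity

lemma continuous_stdNormPdf : Continuous fun s : ℝ => normPdf s 0 1 := by
  unfold normPdf
  exact continuous_const.mul (Real.continuous_exp.comp (by continuity))

lemma stdNormPdf_eq (s : ℝ) :
    normPdf s 0 1 = (Real.sqrt (2 * Real.pi))⁻¹ * Real.exp (-(2⁻¹) * s ^ 2) := by
  unfold normPdf
  rw [mul_one]
  congr 1
  ring

lemma integrable_stdNormPdf : Integrable (fun s : ℝ => normPdf s 0 1) := by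
  simp only [stdNormPdf_eq]
  exact (integrable_exp_neg_mul_sq (by norm_num : (0:ℝ) < 2⁻¹)).const_mul _

lemma integral_stdNormPdf : ∫ s : ℝ, normPdf s 0 1 = 1 := by
  simp only [stdNormPdf_eq]
  rw [MeasureTheory.integral_const_mul, integral_gaussian]
  rw [show Real.pi / 2⁻¹ = 2 * Real.pi by ring]
  rw [inv_mul_cancel₀ (by positivity)]

lemma map_affine (c y : ℝ) (hc : 0 < c) :
    Measure.map (fun s : ℝ => y + s / c) volume = ENNReal.ofReal c • volume := by
  have h1 : (fun s : ℝ => y + s / c) = (fun x : ℝ => y + x) ∘ (fun s : ℝ => c⁻¹ * s) := by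
    funext s; simp [div_eq_inv_mul]
  rw [h1, ← Measure.map_map (measurable_const_add y) (measurable_const_mul _),
    Real.map_volume_mul_left (inv_ne_zero hc.ne'), Measure.map_smul,
    map_add_left_eq_self volume y, inv_inv, abs_of_pos hc]


lemma key_setIntegral (g : ℝ → ℝ) (hg : AEStronglyMeasurable g volume) (y c : ℝ) (hc : 0 < c)
    (S : Set ℝ) (hS : MeasurableSet S) :
    ∫ θ in S, g θ = c⁻¹ * ∫ s in (fun s : ℝ => y + s / c) ⁻¹' S, g (y + s / c) := by
  have he : Measurable fun s : ℝ => y + s / c :=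
    measurable_const.add (measurable_id.div_const c)
  have hmap := map_affine c y hc
  have hac : Measure.map (fun s : ℝ => y + s / c) (volume.restrict ((fun s : ℝ => y + s / c) ⁻¹' S))
      ≪ volume := by
    rw [← Measure.restrict_map he hS, hmap, Measure.restrict_smul]
    exact (Measure.smul_absolutelyContinuous).trans Measure.restrict_le_self.absolutelyContinuous
  have h2 : ∫ s in (fun s : ℝ => y + s / c) ⁻¹' S, g (y + s / c) =
      ∫ θ in S, g θ ∂(Measure.map (fun s : ℝ => y + s / c) volume) := by
    rw [Measure.restrict_map he hS,
      integral_map he.aemeasurable (hg.mono_ac hac)]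
  rw [h2, hmap, Measure.restrict_smul, integral_smul_measure, ENNReal.toReal_ofReal hc.le,
    smul_eq_mul, ← mul_assoc, inv_mul_cancel₀ hc.ne', one_mul]

lemma key_integral (g : ℝ → ℝ) (hg : AEStronglyMeasurable g volume) (y c : ℝ) (hc : 0 < c) :
    ∫ θ : ℝ, g θ = c⁻¹ * ∫ s : ℝ, g (y + s / c) := by
  have := key_setIntegral g hg y c hc Set.univ MeasurableSet.univ
  simpa using this

lemma normPdf_scale (c y s : ℝ) (hc : 0 < c) :
    normPdf y (y + s / c) (1 / c ^ 2) = c * normPdf s 0 1 := by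
  unfold normPdf
  have h1 : Real.sqrt (2 * Real.pi * (1 / c ^ 2)) = Real.sqrt (2 * Real.pi) / c := by
    rw [show 2 * Real.pi * (1 / c ^ 2) = (2 * Real.pi) / c ^ 2 by ring,
      Real.sqrt_div (by positivity), Real.sqrt_sq hc.le]
  rw [h1]
  have h2 : -((y - (y + s / c)) ^ 2) / (2 * (1 / c ^ 2)) = -((s - 0) ^ 2) / (2 * 1) := by
    field_simp
    ring
  rw [h2]
  field_simp

lemma continuous_normPdf (x v : ℝ) : Continuous fun θ => normPdf x θ v := by
  unfold normPdf
  fun_prop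

/-- Appendix result: for a bounded prior density `π`, continuous at `a` with `π(a)>0`,
and data mean `ȳₙ = a + b n^{-1/2}` from the `N(θ,1/n)` model, for any `k > 0` the
posterior probability `Pr(θ < a + (b−k)n^{-1/2} | ȳₙ)` converges to `Φ(−k)`. -/
theorem stmt_10 (π : ℝ → ℝ) (a b : ℝ) (hcont : ContinuousAt π a) (hpos : 0 < π a)
    (hnonneg : ∀ x, 0 ≤ π x) (hint : ∫ x : ℝ, π x = 1) (hbdd : ∃ C : ℝ, ∀ x, π x ≤ C)
    (k : ℝ) (hk : 0 < k) :
    Tendsto (fun n : ℕ =>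
        (∫ θ in Set.Iio (a + (b - k) / Real.sqrt n),
            normPdf (a + b / Real.sqrt n) θ (1 / n) * π θ) /
          (∫ θ : ℝ, normPdf (a + b / Real.sqrt n) θ (1 / n) * π θ))
      atTop (nhds (Phi (-k))) := by
  have hπint : Integrable π := by
    by_contra h
    rw [integral_undef h] at hint; norm_num at hint
  have hπm : AEStronglyMeasurable π volume := hπint.aestronglyMeasurable
  obtain ⟨C, hC⟩ := hbdd
  set F : ℕ → ℝ → ℝ :=
    fun n s => normPdf s 0 1 * π (a + b / Real.sqrt n + s / Real.sqrt n) with hFdef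
  have hFm : ∀ n : ℕ, AEStronglyMeasurable (F n) volume := by
    intro n
    rcases Nat.eq_zero_or_pos n with h0 | h0
    · subst h0
      simp only [hFdef, Nat.cast_zero, Real.sqrt_zero, div_zero, add_zero]
      exact continuous_stdNormPdf.aestronglyMeasurable.mul aestronglyMeasurable_const
    · have hc : (0:ℝ) < Real.sqrt n := Real.sqrt_pos.mpr (by exact_mod_cast h0)
      have hq : Measure.QuasiMeasurePreserving
          (fun s : ℝ => a + b / Real.sqrt n + s / Real.sqrt n) volume volume := by
        refine ⟨measurable_const.add (measurable_id.div_const _), ?_⟩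
        rw [map_affine _ _ hc]
        exact Measure.smul_absolutelyContinuous
      exact continuous_stdNormPdf.aestronglyMeasurable.mul
        (hπm.comp_quasiMeasurePreserving hq)
  have hsqrt : Tendsto (fun n : ℕ => Real.sqrt n) atTop atTop := by
    have h1 : Tendsto (fun x : ℝ => x ^ (1/2 : ℝ)) atTop atTop :=
      tendsto_rpow_atTop (by norm_num)
    exact (h1.comp tendsto_natCast_atTop_atTop).congr
      fun n => (Real.sqrt_eq_rpow _).symm
  have hlim : ∀ s : ℝ, Tendsto (fun n : ℕ => F n s) atTop (nhds (normPdf s 0 1 * π a)) := by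
    intro s
    have hb0 : Tendsto (fun n : ℕ => b / Real.sqrt n) atTop (nhds 0) :=
      Tendsto.div_atTop tendsto_const_nhds hsqrt
    have hs0 : Tendsto (fun n : ℕ => s / Real.sqrt n) atTop (nhds 0) :=
      Tendsto.div_atTop tendsto_const_nhds hsqrt
    have h1 : Tendsto (fun n : ℕ => a + b / Real.sqrt n + s / Real.sqrt n) atTop (nhds a) := by
      have := (tendsto_const_nhds (x := a)).add hb0 |>.add hs0
      simpa using this
    exact Tendsto.const_mul _ (hcont.tendsto.comp h1)
  have hbound : ∀ n : ℕ, ∀ᵐ s : ℝ, ‖F n s‖ ≤ C * normPdf s 0 1 := by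
    intro n
    refine Eventually.of_forall fun s => ?_
    have h0 : 0 ≤ F n s := mul_nonneg (normPdf_nonneg _ _ _) (hnonneg _)
    rw [Real.norm_eq_abs, abs_of_nonneg h0]
    calc F n s ≤ normPdf s 0 1 * C :=
          mul_le_mul_of_nonneg_left (hC _) (normPdf_nonneg _ _ _)
      _ = C * normPdf s 0 1 := mul_comm _ _
  have hbint : Integrable (fun s : ℝ => C * normPdf s 0 1) :=
    integrable_stdNormPdf.const_mul C
  have hnum : Tendsto (fun n : ℕ => ∫ s in Set.Iio (-k), F n s) atTop
      (nhds (∫ s in Set.Iio (-k), normPdf s 0 1 * π a)) :=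
    tendsto_integral_of_dominated_convergence _ (fun n => (hFm n).restrict) hbint.restrict
      (fun n => ae_restrict_of_ae (hbound n))
      (ae_restrict_of_ae (Eventually.of_forall hlim))
  have hden : Tendsto (fun n : ℕ => ∫ s : ℝ, F n s) atTop
      (nhds (∫ s : ℝ, normPdf s 0 1 * π a)) :=
    tendsto_integral_of_dominated_convergence _ hFm hbint hbound
      (Eventually.of_forall hlim)
  have hIio : ∫ s in Set.Iio (-k), normPdf s 0 1 * π a = Phi (-k) * π a := by
    rw [MeasureTheory.integral_mul_const, setIntegral_congr_set Iio_ae_eq_Iic]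
    rfl
  have hdenv : ∫ s : ℝ, normPdf s 0 1 * π a = π a := by
    rw [MeasureTheory.integral_mul_const, integral_stdNormPdf, one_mul]
  have hratio : Tendsto (fun n : ℕ => (∫ s in Set.Iio (-k), F n s) / (∫ s : ℝ, F n s))
      atTop (nhds (Phi (-k))) := by
    have := hnum.div hden (by rw [hdenv]; exact hpos.ne')
    rwa [hIio, hdenv, mul_div_assoc, div_self hpos.ne', mul_one] at this
  refine Tendsto.congr' ?_ hratio
  filter_upwards [eventually_ge_atTop 1] with n hn
  have hnpos : (0:ℝ) < (n:ℝ) := by exact_mod_cast hn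
  have hc : (0:ℝ) < Real.sqrt n := Real.sqrt_pos.mpr hnpos
  have hg : AEStronglyMeasurable
      (fun θ => normPdf (a + b / Real.sqrt n) θ (1 / (n:ℝ)) * π θ) volume :=
    (continuous_normPdf _ _).aestronglyMeasurable.mul hπm
  have hn2 : (1 : ℝ) / (n:ℝ) = 1 / Real.sqrt n ^ 2 := by
    rw [Real.sq_sqrt hnpos.le]
  have hpre : (fun s : ℝ => a + b / Real.sqrt n + s / Real.sqrt n) ⁻¹'
      Set.Iio (a + (b - k) / Real.sqrt n) = Set.Iio (-k) := by
    ext s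
    simp only [Set.mem_preimage, Set.mem_Iio]
    rw [show a + (b - k) / Real.sqrt n
        = a + b / Real.sqrt n + (-k) / Real.sqrt n by ring,
      add_lt_add_iff_left, div_lt_div_iff_of_pos_right hc]
  have h3 : ∀ s : ℝ, normPdf (a + b / Real.sqrt n) (a + b / Real.sqrt n + s / Real.sqrt n)
      (1 / (n:ℝ)) * π (a + b / Real.sqrt n + s / Real.sqrt n) = Real.sqrt n * F n s := by
    intro s
    rw [hn2, normPdf_scale _ _ _ hc, hFdef]
    ring
  have hnum_eq : (∫ θ in Set.Iio (a + (b - k) / Real.sqrt n),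
        normPdf (a + b / Real.sqrt n) θ (1 / (n:ℝ)) * π θ)
      = ∫ s in Set.Iio (-k), F n s := by
    rw [key_setIntegral _ hg (a + b / Real.sqrt n) _ hc _ measurableSet_Iio, hpre]
    simp only [h3]
    rw [MeasureTheory.integral_const_mul, ← mul_assoc, inv_mul_cancel₀ hc.ne', one_mul]
  have hden_eq : (∫ θ : ℝ, normPdf (a + b / Real.sqrt n) θ (1 / (n:ℝ)) * π θ)
      = ∫ s : ℝ, F n s := by
    rw [key_integral _ hg (a + b / Real.sqrt n) _ hc]
    simp only [h3]
    rw [MeasureTheory.integral_const_mul, ← mul_assoc, inv_mul_cancel₀ hc.ne', one_mul]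
  simp only [hnum_eq, hden_eq]
end

section
/- In the two-Normal model setting with equal prior odds and g₀ < g₁, if sqrt(g₁/g₀) > 1 then for every fixed z there exists N such that Pr(M₀|data) > Pr(M₁|data) for all n ≥ N; i.e., model M₀ is asymptotically favored regardless of the (fixed) value of z. -/
/-!
As `n → ∞` the ratio `(1 + n g₁)/(1 + n g₀)` tends to `g₁/g₀` and the exponent of the Bayes factor
is `O(1/n)`, so `BF₀₁ → √(g₁/g₀) > 1`; hence `Pr(M₁|data) = (1 + BF₀₁)⁻¹` is eventually below `½`.
-/

open Filter Topology

noncomputable def bayesFactor01 (g0 g1 z : ℝ) (n : ℕ) : ℝ :=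
  Real.sqrt ((1 + n * g1) / (1 + n * g0)) *
    Real.exp ((g0 - g1) * n * z ^ 2 / (2 * (1 + n * g0) * (1 + n * g1)))

lemma tendsto_one_div_natCast_add (c : ℝ) :
    Tendsto (fun n : ℕ => 1 / (n : ℝ) + c) atTop (𝓝 c) := by
  simpa using tendsto_one_div_atTop_nhds_zero_nat.add_const c

lemma tendsto_one_add_mul_div_one_add_mul {a b : ℝ} (hb : b ≠ 0) :
    Tendsto (fun n : ℕ => (1 + n * a) / (1 + n * b)) atTop (𝓝 (a / b)) := by
  refine ((tendsto_one_div_natCast_add a).div (tendsto_one_div_natCast_add b) hb).congr' ?_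
  filter_upwards [eventually_ne_atTop 0] with n hn
  have hn' : (n : ℝ) ≠ 0 := Nat.cast_ne_zero.mpr hn
  simp only [Pi.div_apply]
  field_simp

lemma tendsto_div_one_add_mul_mul_one_add_mul {a b : ℝ} (ha : a ≠ 0) (hb : b ≠ 0) :
    Tendsto (fun n : ℕ => (n : ℝ) / ((1 + n * a) * (1 + n * b))) atTop (𝓝 0) := by
  have := tendsto_one_div_atTop_nhds_zero_nat.div
    ((tendsto_one_div_natCast_add a).mul (tendsto_one_div_natCast_add b)) (mul_ne_zero ha hb)
  rw [zero_div] at this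
  refine this.congr' ?_
  filter_upwards [eventually_ne_atTop 0] with n hn
  have hn' : (n : ℝ) ≠ 0 := Nat.cast_ne_zero.mpr hn
  simp only [Pi.div_apply]
  field_simp

lemma tendsto_bayesFactor01 {g0 g1 : ℝ} (hg0 : g0 ≠ 0) (hg1 : g1 ≠ 0) (z : ℝ) :
    Tendsto (bayesFactor01 g0 g1 z) atTop (𝓝 (Real.sqrt (g1 / g0))) := by
  have hexponent : Tendsto (fun n : ℕ =>
      (g0 - g1) * n * z ^ 2 / (2 * (1 + n * g0) * (1 + n * g1))) atTop (𝓝 0) := by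
    have := (tendsto_div_one_add_mul_mul_one_add_mul hg0 hg1).const_mul ((g0 - g1) * z ^ 2 / 2)
    rw [mul_zero] at this
    refine this.congr fun n => ?_
    simp only [div_eq_mul_inv, mul_inv]
    ring
  unfold bayesFactor01
  simpa using ((tendsto_one_add_mul_div_one_add_mul hg0).sqrt).mul (hexponent.rexp)

lemma inv_one_add_lt_one_sub_inv_one_add {b : ℝ} (hb : 1 < b) :
    (1 + b)⁻¹ < 1 - (1 + b)⁻¹ := by
  have : (1 + b)⁻¹ < 2⁻¹ := inv_strictAnti₀ two_pos (by linarith)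
  linarith

theorem stmt_16_general (g0 g1 : ℝ) (hg0 : 0 < g0) (hg01 : g0 < g1) :
    ∀ z : ℝ, ∃ N : ℕ, ∀ n ≥ N,
      (1 - (1 + Real.sqrt ((1 + n * g1) / (1 + n * g0)) *
          Real.exp ((g0 - g1) * n * z ^ 2 / (2 * (1 + n * g0) * (1 + n * g1))))⁻¹) >
      (1 + Real.sqrt ((1 + n * g1) / (1 + n * g0)) *
          Real.exp ((g0 - g1) * n * z ^ 2 / (2 * (1 + n * g0) * (1 + n * g1))))⁻¹ := by
  intro z
  have hroot : 1 < Real.sqrt (g1 / g0) :=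
    Real.lt_sqrt_of_sq_lt (by rw [one_pow, one_lt_div hg0]; exact hg01)
  have hlim := tendsto_bayesFactor01 hg0.ne' (hg0.trans hg01).ne' z
  obtain ⟨N, hN⟩ := eventually_atTop.mp (hlim.eventually (eventually_gt_nhds hroot))
  exact ⟨N, fun n hn => inv_one_add_lt_one_sub_inv_one_add (hN n hn)⟩

/-- Two-Normal setting with equal prior odds and `g₀ < g₁`: if `√(g₁/g₀) > 1` then
for every fixed `z` there is `N` with `Pr(M₀|data) > Pr(M₁|data)` for all `n ≥ N`,
where `Pr(M₁|data) = (1 + BF₀₁)⁻¹` and `Pr(M₀|data) = 1 − Pr(M₁|data)`. -/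
theorem stmt_16 (g0 g1 : ℝ) (hg0 : 0 < g0) (hg01 : g0 < g1)
    (hroot : 1 < Real.sqrt (g1 / g0)) :
    ∀ z : ℝ, ∃ N : ℕ, ∀ n ≥ N,
      (1 - (1 + Real.sqrt ((1 + n * g1) / (1 + n * g0)) *
          Real.exp ((g0 - g1) * n * z ^ 2 / (2 * (1 + n * g0) * (1 + n * g1))))⁻¹) >
      (1 + Real.sqrt ((1 + n * g1) / (1 + n * g0)) *
          Real.exp ((g0 - g1) * n * z ^ 2 / (2 * (1 + n * g0) * (1 + n * g1))))⁻¹ :=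
  stmt_16_general g0 g1 hg0 hg01
end
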